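/- arXiv:1502.00790 — 13 statements merged into one kernel-verified Lean document; each statement's English description precedes it below -/
import Mathlib

section
/- Let X be a finite cycle set, S a finite nonempty set, and α : X × X × S → Fun(S,S) a map, written (x,y,s) ↦ α_{x,y}(s,-). Then S × X is a cycle set under the operation (s,x)·(t,y) = (α_{x,y}(s,t), x·y) if and only if each map t ↦ α_{x,y}(s,t) is bijective and the identity α_{x·y, x·z}(α_{x,y}(r,s), α_{x,z}(r,t)) = α_{y·x, y·z}(α_{y,x}(s,r), α_{y,z}(s,t)) holds for all x,y,z ∈ X and r,s,t ∈ S. -/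
def IsCycleSet {X : Type*} (op : X → X → X) : Prop :=
  (∀ x, Function.Bijective (op x)) ∧
  ∀ x y z, op (op x y) (op x z) = op (op y x) (op y z)

def IsDynamicalCocycle {X S : Type*} (op : X → X → X) (α : X → X → S → S → S) : Prop :=
  (∀ x y s, Function.Bijective (α x y s)) ∧
  ∀ x y z r s t, α (op x y) (op x z) (α x y r s) (α x z r t)
    = α (op y x) (op y z) (α y x s r) (α y z s t)

def extOp {X S : Type*} (op : X → X → X) (α : X → X → S → S → S) :
    S × X → S × X → S × X :=
  fun p q => (α p.2 q.2 p.1 q.1, op p.2 q.2)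

theorem stmt0 {X S : Type} [Fintype X] [Fintype S] [Nonempty S]
    (op : X → X → X) (hX : IsCycleSet op) (α : X → X → S → S → S) :
    IsCycleSet (extOp op α) ↔
      ((∀ x y s, Function.Bijective (α x y s)) ∧
        ∀ x y z r s t, α (op x y) (op x z) (α x y r s) (α x z r t)
          = α (op y x) (op y z) (α y x s r) (α y z s t)) := by
  constructor
  · rintro ⟨hbij, hlaw⟩
    constructor
    · intro x y s
      constructor
      · intro t t' h
        have := (hbij (s, x)).1 (a₁ := (t, y)) (a₂ := (t', y))
          (by simp [extOp, h])
        exact congrArg Prod.fst this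
      · intro u
        obtain ⟨⟨t, y'⟩, ht⟩ := (hbij (s, x)).2 (u, op x y)
        simp only [extOp, Prod.mk.injEq] at ht
        have hy : y' = y := (hX.1 x).1 ht.2
        subst hy
        exact ⟨t, ht.1⟩
    · intro x y z r s t
      have := hlaw (r, x) (s, y) (t, z)
      simpa [extOp] using congrArg Prod.fst this
  · rintro ⟨hbij, hlaw⟩
    constructor
    · rintro ⟨s, x⟩
      constructor
      · rintro ⟨t, y⟩ ⟨t', y'⟩ h
        simp only [extOp, Prod.mk.injEq] at h
        have hy : y = y' := (hX.1 x).1 h.2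
        subst hy
        exact Prod.ext ((hbij x y s).1 h.1) rfl
      · rintro ⟨u, w⟩
        obtain ⟨y, hy⟩ := (hX.1 x).2 w
        obtain ⟨t, ht⟩ := (hbij x y s).2 u
        exact ⟨(t, y), by simp [extOp, hy, ht]⟩
    · rintro ⟨r, x⟩ ⟨s, y⟩ ⟨t, z⟩
      simp only [extOp, Prod.mk.injEq]
      exact ⟨hlaw x y z r s t, hX.2 x y z⟩
end

section
/- Let p : X → Y be a covering map of finite cycle sets, i.e. a surjective cycle set homomorphism all of whose fibers p⁻¹(y) have the same cardinality. Then there exist a finite nonempty set S and a dynamical cocycle α of Y with values in S such that X is isomorphic as a cycle set to the dynamical extension S ×_α Y. -/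
def IsCoveringMapCS {X Y : Type} (opX : X → X → X) (opY : Y → Y → Y) (p : X → Y) : Prop :=
  Function.Surjective p ∧ (∀ a b, p (opX a b) = opY (p a) (p b)) ∧
  ∀ y y' : Y, Nat.card {x // p x = y} = Nat.card {x // p x = y'}

theorem stmt4 {X Y : Type} [Fintype X] [Fintype Y]
    (opX : X → X → X) (opY : Y → Y → Y)
    (hX : IsCycleSet opX) (hY : IsCycleSet opY)
    (p : X → Y) (hp : IsCoveringMapCS opX opY p) :
    ∃ (S : Type) (_ : Fintype S) (_ : Nonempty S) (α : Y → Y → S → S → S),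
      IsDynamicalCocycle opY α ∧
      ∃ e : X ≃ S × Y, ∀ a b, e (opX a b) = extOp opY α (e a) (e b) := by
  obtain ⟨hsurj, hhom, hcard⟩ := hp
  by_cases hXe : IsEmpty X
  · have hYe : IsEmpty Y := ⟨fun y => (hsurj y).elim fun x _ => hXe.elim x⟩
    refine ⟨Unit, inferInstance, ⟨()⟩, fun _ _ _ t => t, ⟨?_, ?_⟩, ?_⟩
    · exact fun _ _ _ => Function.bijective_id
    · exact fun x => hYe.elim x
    · exact ⟨Equiv.equivOfIsEmpty _ _, fun a => hXe.elim a⟩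
  · rw [not_isEmpty_iff] at hXe
    obtain ⟨x₀⟩ := hXe
    set n := Nat.card {x // p x = p x₀} with hn
    have hfib : ∀ y, Nat.card {x // p x = y} = n := fun y => hcard y (p x₀)
    have φ : ∀ y, Fin n ≃ {x // p x = y} := fun y => (Finite.equivFinOfCardEq (hfib y)).symm
    have hn0 : 0 < n := by
      rw [hn]
      exact Nat.card_pos_iff.mpr ⟨⟨⟨x₀, rfl⟩⟩, inferInstance⟩
    have hco : ∀ (y y' : Y) (_ : y = y') (x : X) (hx : p x = y) (hx' : p x = y'),
        (φ y).symm ⟨x, hx⟩ = (φ y').symm ⟨x, hx'⟩ := by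
      rintro y _ rfl x hx hx'; rfl
    set α : Y → Y → Fin n → Fin n → Fin n := fun y z s t =>
      (φ (opY y z)).symm ⟨opX (φ y s).1 (φ z t).1, by rw [hhom, (φ y s).2, (φ z t).2]⟩
      with hα
    refine ⟨Fin n, inferInstance, ⟨⟨0, hn0⟩⟩, α, ⟨?_, ?_⟩, ?_⟩
    · -- bijectivity of α y z s
      intro y z s
      rw [← Finite.injective_iff_bijective]
      intro t t' h
      simp only [hα] at h
      have h2 := congrArg (fun u => ((φ (opY y z)) u).1) h
      simp only [Equiv.apply_symm_apply] at h2
      have h3 : (φ z t).1 = (φ z t').1 := (hX.1 (φ y s).1).1 h2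
      have h4 : φ z t = φ z t' := Subtype.ext h3
      exact (φ z).injective h4
    · -- cocycle identity
      intro y z w r s t
      simp only [hα, Equiv.apply_symm_apply]
      simp only [hX.2 (φ y r).1 (φ z s).1 (φ w t).1]
      exact hco _ _ (hY.2 y z w) _ _ _
    · -- the isomorphism
      refine ⟨⟨fun x => ((φ (p x)).symm ⟨x, rfl⟩, p x), fun q => (φ q.2 q.1).1, ?_, ?_⟩, ?_⟩
      · intro x
        simp only [Equiv.apply_symm_apply]
      · rintro ⟨s, y⟩
        have h1 : p (φ y s).1 = y := (φ y s).2
        refine Prod.ext ?_ h1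
        show (φ (p (φ y s).1)).symm ⟨(φ y s).1, rfl⟩ = s
        rw [hco _ y h1 _ rfl (φ y s).2]
        simp
      · intro a b
        refine Prod.ext ?_ (hhom a b)
        show (φ (p (opX a b))).symm ⟨opX a b, rfl⟩ = α (p a) (p b) _ _
        simp only [hα, Equiv.coe_fn_mk, Equiv.apply_symm_apply]
        exact hco _ _ (hhom a b) _ rfl _
end

section
/- Let X be a finite cycle set which is not simple and has |X| > 1. Then there exist a finite cycle set Y with 1 < |Y| < |X|, a finite nonempty set S, and a dynamical cocycle α of Y with values in S such that X is isomorphic to the dynamical extension S ×_α Y. -/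
def IsSimpleCS {X : Type} (opX : X → X → X) : Prop :=
  1 < Nat.card X ∧
  ∀ (Y : Type) (opY : Y → Y → Y) (p : X → Y), IsCycleSet opY →
    IsCoveringMapCS opX opY p → Nat.card Y = 1 ∨ Nat.card Y = Nat.card X

theorem stmt5 {X : Type} [Fintype X] (opX : X → X → X) (hX : IsCycleSet opX)
    (hcard : 1 < Nat.card X) (hns : ¬ IsSimpleCS opX) :
    ∃ (Y : Type) (_ : Fintype Y) (opY : Y → Y → Y) (S : Type) (_ : Fintype S)
      (_ : Nonempty S) (α : Y → Y → S → S → S),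
      IsCycleSet opY ∧ 1 < Nat.card Y ∧ Nat.card Y < Nat.card X ∧
      IsDynamicalCocycle opY α ∧
      ∃ e : X ≃ S × Y, ∀ a b, e (opX a b) = extOp opY α (e a) (e b) := by
  classical
  rw [IsSimpleCS] at hns
  push_neg at hns
  obtain ⟨Y, opY, p, hYcs, hcov, hne1, hneX⟩ := hns hcard
  obtain ⟨hsurj, hhom, hfib⟩ := hcov
  have hYfin : Finite Y := Finite.of_surjective p hsurj
  have fY : Fintype Y := Fintype.ofFinite Y
  have hXne : Nonempty X := (Nat.card_pos_iff.mp (by omega)).1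
  obtain ⟨x0⟩ := hXne
  have hf : ∀ y : Y, Nonempty ({x // p x = p x0} ≃ {x // p x = y}) :=
    fun y => Finite.card_eq.mp (hfib (p x0) y)
  set S : Type := {x // p x = p x0} with hSdef
  have fS : Fintype S := by rw [hSdef]; infer_instance
  have hSne : Nonempty S := ⟨⟨x0, rfl⟩⟩
  let f : ∀ y : Y, S ≃ {x // p x = y} := fun y => (hf y).some
  -- the equivalence e
  have hpf : ∀ (y : Y) (s : S), p ((f y s : {x // p x = y}) : X) = y := fun y s => (f y s).2
  have hA : ∀ (x : X) (y : Y) (h : p x = y),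
      (f y).symm ⟨x, h⟩ = (f (p x)).symm ⟨x, rfl⟩ := by
    intro x y h; subst h; rfl
  let e : X ≃ S × Y :=
    { toFun := fun x => ((f (p x)).symm ⟨x, rfl⟩, p x)
      invFun := fun q => ((f q.2 q.1 : {x // p x = q.2}) : X)
      left_inv := by
        intro x
        simp only
        have : (f (p x)) ((f (p x)).symm ⟨x, rfl⟩) = ⟨x, rfl⟩ := (f (p x)).apply_symm_apply _
        rw [this]
      right_inv := by
        rintro ⟨s, y⟩
        have hp : p ((f y s : {x // p x = y}) : X) = y := hpf y s
        simp only
        refine Prod.ext ?_ hp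
        rw [← hA _ _ hp]
        have : (⟨((f y s : {x // p x = y}) : X), hp⟩ : {x // p x = y}) = f y s :=
          Subtype.ext rfl
        rw [this, Equiv.symm_apply_apply] }
  -- the cocycle
  have hαpf : ∀ (y z : Y) (s t : S),
      p (opX ((f y s : {x // p x = y}) : X) ((f z t : {x // p x = z}) : X)) = opY y z := by
    intro y z s t
    rw [hhom, hpf, hpf]
  let α : Y → Y → S → S → S := fun y z s t =>
    (f (opY y z)).symm ⟨opX ((f y s : {x // p x = y}) : X) ((f z t : {x // p x = z}) : X),
      hαpf y z s t⟩
  have hchar : ∀ (y z : Y) (s t : S),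
      ((f (opY y z) (α y z s t) : {x // p x = opY y z}) : X)
        = opX ((f y s : {x // p x = y}) : X) ((f z t : {x // p x = z}) : X) := by
    intro y z s t
    show (((f (opY y z)) ((f (opY y z)).symm _) : {x // p x = opY y z}) : X) = _
    rw [Equiv.apply_symm_apply]
  have hαinj : ∀ y z s, Function.Injective (α y z s) := by
    intro y z s t t' h
    have h2 := congrArg (fun w => ((f (opY y z) w : {x // p x = opY y z}) : X)) h
    simp only [hchar] at h2
    have h3 := (hX.1 _).1 h2
    exact (f z).injective (Subtype.ext h3)
  -- cocycle condition
  have hcoc : ∀ x y z r s t, α (opY x y) (opY x z) (α x y r s) (α x z r t)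
      = α (opY y x) (opY y z) (α y x s r) (α y z s t) := by
    intro x y z r s t
    have hidx : opY (opY x y) (opY x z) = opY (opY y x) (opY y z) := hYcs.2 x y z
    apply (f (opY (opY x y) (opY x z))).injective
    apply Subtype.ext
    have hL := hchar (opY x y) (opY x z) (α x y r s) (α x z r t)
    have hR := hchar (opY y x) (opY y z) (α y x s r) (α y z s t)
    rw [hL]
    have : ((f (opY (opY x y) (opY x z))
        (α (opY y x) (opY y z) (α y x s r) (α y z s t)) : {w // p w = _}) : X)
        = ((f (opY (opY y x) (opY y z))
        (α (opY y x) (opY y z) (α y x s r) (α y z s t)) : {w // p w = _}) : X) := by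
      rw [hidx]
    rw [this, hR, hchar, hchar, hchar, hchar]
    exact hX.2 _ _ _
  refine ⟨Y, fY, opY, S, fS, hSne, α, hYcs, ?_, ?_, ⟨fun y z s => ?_, hcoc⟩, ⟨e, ?_⟩⟩
  · -- 1 < Nat.card Y
    have h0 : 0 < Nat.card Y := Nat.card_pos_iff.mpr ⟨⟨p x0⟩, hYfin⟩
    omega
  · -- Nat.card Y < Nat.card X
    have hprod : Nat.card X = Nat.card S * Nat.card Y := by
      rw [Nat.card_congr e, Nat.card_prod]
    have hS0 : 0 < Nat.card S := Nat.card_pos_iff.mpr ⟨hSne, Finite.of_fintype S⟩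
    have hY0 : 0 < Nat.card Y := Nat.card_pos_iff.mpr ⟨⟨p x0⟩, hYfin⟩
    have hle : Nat.card Y ≤ Nat.card X := by
      rw [hprod]; nlinarith
    rcases lt_or_eq_of_le hle with h | h
    · exact h
    · exact absurd h hneX
  · -- bijectivity of α y z s
    exact (Finite.injective_iff_bijective).mp (hαinj y z s)
  · -- homomorphism property of e
    intro a b
    show ((f (p (opX a b))).symm ⟨opX a b, rfl⟩, p (opX a b))
      = (α (p a) (p b) ((f (p a)).symm ⟨a, rfl⟩) ((f (p b)).symm ⟨b, rfl⟩),
         opY (p a) (p b))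
    refine Prod.ext ?_ (hhom a b)
    have ha : ((f (p a) ((f (p a)).symm ⟨a, rfl⟩) : {x // p x = p a}) : X) = a := by
      rw [Equiv.apply_symm_apply]
    have hb : ((f (p b) ((f (p b)).symm ⟨b, rfl⟩) : {x // p x = p b}) : X) = b := by
      rw [Equiv.apply_symm_apply]
    show (f (p (opX a b))).symm ⟨opX a b, rfl⟩
      = (f (opY (p a) (p b))).symm ⟨opX _ _, _⟩
    rw [← hA (opX a b) (opY (p a) (p b)) (hhom a b)]
    congr 1
    apply Subtype.ext
    show opX a b = opX _ _
    rw [ha, hb]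
end

section
/- The cycle set X = {1,2,3,4} defined by φ₁ = (14), φ₂ = (1342), φ₃ = (23), φ₄ = (1243) (where φ_x(y) = x·y and permutations are in cycle notation) is a simple cycle set. -/
def op7 : Fin 4 → Fin 4 → Fin 4 :=
  ![![3, 1, 2, 0], ![2, 0, 3, 1], ![0, 2, 1, 3], ![1, 3, 0, 2]]

lemma no_two_quotient7 : ∀ f : Fin 4 → Fin 2, Function.Surjective f →
    ¬ (∀ a b a' b', f a = f a' → f b = f b' → f (op7 a b) = f (op7 a' b')) := by decide

lemma quot_card7 (Y : Type) (opY : Y → Y → Y) (p : Fin 4 → Y)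
    (hsurj : Function.Surjective p) (hhom : ∀ a b, p (op7 a b) = opY (p a) (p b))
    (hfib : ∀ y y' : Y, Nat.card {x // p x = y} = Nat.card {x // p x = y'}) :
    Nat.card Y = 1 ∨ Nat.card Y = 4 := by
  have hfinY : Finite Y := Finite.of_surjective p hsurj
  have : Fintype Y := Fintype.ofFinite Y
  classical
  obtain ⟨y0⟩ : Nonempty Y := ⟨p 0⟩
  have h4 : Fintype.card Y * Nat.card {x // p x = y0} = 4 := by
    have e := Fintype.card_congr (Equiv.sigmaFiberEquiv p)
    rw [Fintype.card_sigma, Fintype.card_fin] at e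
    calc Fintype.card Y * Nat.card {x // p x = y0}
        = ∑ _y : Y, Nat.card {x // p x = y0} := by
          rw [Finset.sum_const, Finset.card_univ, smul_eq_mul]
      _ = ∑ y : Y, Fintype.card {x // p x = y} := by
          refine Finset.sum_congr rfl fun y _ => ?_
          rw [← Nat.card_eq_fintype_card, hfib y0 y]
      _ = 4 := e
  have hdvd : Fintype.card Y ∣ 4 := ⟨_, h4.symm⟩
  rw [Nat.card_eq_fintype_card]
  have hle : Fintype.card Y ≤ 4 := Nat.le_of_dvd (by norm_num) hdvd
  interval_cases h : Fintype.card Y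
  · omega
  · left; rfl
  · exfalso
    have e2 : Y ≃ Fin 2 := Fintype.equivFinOfCardEq h
    refine no_two_quotient7 (fun x => e2 (p x)) (fun i => ?_) ?_
    · obtain ⟨y, hy⟩ := e2.surjective i
      obtain ⟨x, hx⟩ := hsurj y
      exact ⟨x, by simp only [hx, hy]⟩
    · intro a b a' b' ha hb
      have ha' : p a = p a' := e2.injective ha
      have hb' : p b = p b' := e2.injective hb
      simp only [hhom, ha', hb']
  · exact absurd hdvd (by omega)
  · right; rfl

theorem stmt7 : IsCycleSet op7 ∧ IsSimpleCS op7 := by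
  refine ⟨⟨by decide, by decide⟩, ?_, ?_⟩
  · simp [Nat.card_eq_fintype_card]
  · intro Y opY p _ ⟨hsurj, hhom, hfib⟩
    rcases quot_card7 Y opY p hsurj hhom hfib with h | h
    · exact Or.inl h
    · exact Or.inr (by simp [h, Nat.card_eq_fintype_card])
end

section
/- Let X be a finite cycle set, S a finite nonempty set, and α, β dynamical cocycles of X with values in S that are cohomologous via γ : X → Sym(S), i.e. γ_{x·y}(α_{x,y}(γ_x⁻¹(s), γ_y⁻¹(t))) = β_{x,y}(s,t) for all x,y ∈ X and s,t ∈ S. Then the map F : S ×_α X → S ×_β X, (s,x) ↦ (γ_x(s), x), is a bijective cycle set homomorphism. -/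
theorem stmt8 {X S : Type} [Fintype X] [Fintype S] [Nonempty S]
    (op : X → X → X) (hX : IsCycleSet op)
    (α β : X → X → S → S → S)
    (hα : IsDynamicalCocycle op α) (hβ : IsDynamicalCocycle op β)
    (γ : X → Equiv.Perm S)
    (hcoh : ∀ x y s t, γ (op x y) (α x y ((γ x)⁻¹ s) ((γ y)⁻¹ t)) = β x y s t) :
    Function.Bijective (fun p : S × X => ((γ p.2 p.1, p.2) : S × X)) ∧
    ∀ p q : S × X,
      (fun p : S × X => ((γ p.2 p.1, p.2) : S × X)) (extOp op α p q)
        = extOp op β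
            ((fun p : S × X => ((γ p.2 p.1, p.2) : S × X)) p)
            ((fun p : S × X => ((γ p.2 p.1, p.2) : S × X)) q) := by
  constructor
  · constructor
    · rintro ⟨s, x⟩ ⟨t, y⟩ h
      simp only [Prod.mk.injEq] at h
      obtain ⟨h1, h2⟩ := h
      subst h2
      exact Prod.ext ((γ x).injective h1) rfl
    · rintro ⟨s, x⟩
      exact ⟨((γ x)⁻¹ s, x), by simp⟩
  · rintro ⟨s, x⟩ ⟨t, y⟩
    simp only [extOp, Prod.mk.injEq]
    have := hcoh x y (γ x s) (γ y t)
    simpa using this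
end

section
/- Let X be a finite cycle set, S a finite nonempty set, and α, β dynamical cocycles of X with values in S. If F : S ×_α X → S ×_β X is a bijective cycle set homomorphism satisfying p_β ∘ F = p_α, where p_α and p_β are the canonical projections to X, then α and β are cohomologous, i.e. there exists γ : X → Sym(S) with γ_{x·y}(α_{x,y}(γ_x⁻¹(s), γ_y⁻¹(t))) = β_{x,y}(s,t) for all x,y,s,t. -/
theorem stmt9 {X S : Type} [Fintype X] [Fintype S] [Nonempty S]
    (op : X → X → X) (hX : IsCycleSet op)
    (α β : X → X → S → S → S)
    (hα : IsDynamicalCocycle op α) (hβ : IsDynamicalCocycle op β)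
    (F : S × X → S × X) (hFbij : Function.Bijective F)
    (hFhom : ∀ p q : S × X, F (extOp op α p q) = extOp op β (F p) (F q))
    (hFproj : ∀ p : S × X, (F p).2 = p.2) :
    ∃ γ : X → Equiv.Perm S,
      ∀ x y s t, γ (op x y) (α x y ((γ x)⁻¹ s) ((γ y)⁻¹ t)) = β x y s t := by
  have hbij : ∀ x : X, Function.Bijective (fun s : S => (F (s, x)).1) := by
    intro x
    constructor
    · intro s s' h
      have h2 : F (s, x) = F (s', x) := by
        have e1 := hFproj (s, x)
        have e2 := hFproj (s', x)
        ext
        · exact h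
        · simp [e1, e2]
      exact (Prod.mk.injEq _ _ _ _).mp (hFbij.1 h2) |>.1
    · intro t
      obtain ⟨p, hp⟩ := hFbij.2 (t, x)
      have hx : p.2 = x := by rw [← hFproj p, hp]
      refine ⟨p.1, ?_⟩
      simp only [← hx, Prod.mk.eta, hp]
  set γ : X → Equiv.Perm S := fun x => Equiv.ofBijective _ (hbij x) with hγ
  refine ⟨γ, fun x y s t => ?_⟩
  set a := (γ x)⁻¹ s
  set b := (γ y)⁻¹ t
  have key := hFhom (a, x) (b, y)
  have hs : (F (a, x)).1 = s := (γ x).apply_symm_apply s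
  have ht : (F (b, y)).1 = t := (γ y).apply_symm_apply t
  have hxx : (F (a, x)).2 = x := hFproj _
  have hyy : (F (b, y)).2 = y := hFproj _
  have : γ (op x y) (α x y a b) = (F (α x y a b, op x y)).1 := rfl
  rw [this]
  have : F (α x y a b, op x y) = F (extOp op α (a, x) (b, y)) := rfl
  rw [this, key]
  simp [extOp, hs, ht, hxx, hyy]
end

section
/- Let X be a finite cycle set acting on a finite cycle set S, meaning there is a map X × S → S, (x,s) ↦ xs, such that x(s·t) = xs·xt, (x·y)(xs) = (y·x)(ys), and s ↦ xs is bijective for all x,y ∈ X and s,t ∈ S. Then the map α : X × X × S → Fun(S,S) given by α_{x,y}(s,t) = (x·y)s · (y·x)t is a dynamical cocycle of X with values in S; in particular S × X with operation (s,x)·(t,y) = ((x·y)s·(y·x)t, x·y) is a cycle set. -/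
theorem stmt10 {X S : Type} [Fintype X] [Fintype S]
    (opX : X → X → X) (opS : S → S → S)
    (hX : IsCycleSet opX) (hS : IsCycleSet opS)
    (a : X → S → S)
    (h1 : ∀ x s t, a x (opS s t) = opS (a x s) (a x t))
    (h2 : ∀ x y s, a (opX x y) (a x s) = a (opX y x) (a y s))
    (h3 : ∀ x, Function.Bijective (a x)) :
    IsDynamicalCocycle opX (fun x y s t => opS (a (opX x y) s) (a (opX y x) t)) ∧
    IsCycleSet (extOp opX (fun x y s t => opS (a (opX x y) s) (a (opX y x) t))) := by
  have hbij : ∀ x y s, Function.Bijective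
      (fun t => opS (a (opX x y) s) (a (opX y x) t)) := by
    intro x y s
    exact (hS.1 _).comp (h3 _)
  have hcoc : ∀ x y z r s t,
      opS (a (opX (opX x y) (opX x z)) (opS (a (opX x y) r) (a (opX y x) s)))
          (a (opX (opX x z) (opX x y)) (opS (a (opX x z) r) (a (opX z x) t)))
    = opS (a (opX (opX y x) (opX y z)) (opS (a (opX y x) s) (a (opX x y) r)))
          (a (opX (opX y z) (opX y x)) (opS (a (opX y z) s) (a (opX z y) t))) := by
    intro x y z r s t
    simp only [h1]
    rw [← h2 (opX x y) (opX x z) r, ← h2 (opX y x) (opX y z) s,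
        hX.2 x z y, hX.2 y z x, ← hX.2 x y z,
        h2 (opX z x) (opX z y) t]
    exact hS.2 _ _ _
  refine ⟨⟨hbij, hcoc⟩, ?_, ?_⟩
  · intro p
    rw [← Finite.injective_iff_bijective]
    rintro ⟨t, y⟩ ⟨t', y'⟩ h
    simp only [extOp, Prod.mk.injEq] at h
    obtain ⟨h4, h5⟩ := h
    have hy : y = y' := (hX.1 p.2).1 h5
    subst hy
    have : t = t' := (hbij p.2 y p.1).1 h4
    simp [this]
  · rintro ⟨s, x⟩ ⟨t, y⟩ ⟨r, z⟩
    simp only [extOp, Prod.mk.injEq]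
    exact ⟨hcoc x y z s t r, hX.2 x y z⟩
end

section
/- Let X be a finite cycle set, A a finite abelian group, and f : X × X → A a map. Then A × X with operation (a,x)·(b,y) = (b + f(x,y), x·y) is a cycle set if and only if f(x,z) + f(x·y, x·z) = f(y,z) + f(y·x, y·z) for all x,y,z ∈ X. -/
theorem stmt12 {X A : Type} [Fintype X] [AddCommGroup A] [Fintype A]
    (op : X → X → X) (hX : IsCycleSet op) (f : X → X → A) :
    IsCycleSet (fun p q : A × X => ((q.1 + f p.2 q.2, op p.2 q.2) : A × X)) ↔
      ∀ x y z, f x z + f (op x y) (op x z) = f y z + f (op y x) (op y z) := by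
  constructor
  · rintro ⟨-, h2⟩ x y z
    have := congrArg Prod.fst (h2 (0, x) (0, y) (0, z))
    simpa using this
  · intro H
    constructor
    · intro p
      constructor
      · rintro ⟨b, y⟩ ⟨c, z⟩ h
        simp only [Prod.mk.injEq] at h
        have hyz : y = z := (hX.1 p.2).1 h.2
        subst hyz
        have : b = c := by
          have := h.1
          exact add_right_cancel this
        simp [this]
      · rintro ⟨b, y⟩
        obtain ⟨y', hy'⟩ := (hX.1 p.2).2 y
        exact ⟨(b - f p.2 y', y'), by simp [hy']⟩
    · rintro ⟨a, x⟩ ⟨b, y⟩ ⟨c, z⟩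
      simp only [Prod.mk.injEq]
      refine ⟨?_, hX.2 x y z⟩
      have := H x y z
      linear_combination (norm := abel) this
end

section
/- Let X = {1,...,8} be the square-free cycle set with x·y = φ_x(y) where φ₁ = (57), φ₂ = (68), φ₃ = (26)(48)(57), φ₄ = (15)(37)(68), φ₅ = (13), φ₆ = (24), φ₇ = (13)(26)(48), φ₈ = (15)(24)(37). Then the map x ↦ φ_x is injective; consequently the retraction of the associated solution equals the solution itself, and the solution is not a multipermutation solution. In particular, X yields a finite nondegenerate involutive square-free solution of the Yang–Baxter equation with |X| ≥ 2 that is not a multipermutation solution (a counterexample to the Gateva-Ivanova conjecture). -/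
def IsMPCS : ℕ → (X : Type) → (X → X → X) → Prop
  | 0, X, _ => ∀ a b : X, a = b
  | m + 1, X, op => ∃ (Y : Type) (opY : Y → Y → Y) (p : X → Y),
      Function.Surjective p ∧
      (∀ a b : X, p a = p b ↔ op a = op b) ∧
      (∀ a b, p (op a b) = opY (p a) (p b)) ∧
      IsMPCS m Y opY

def phi : Fin 8 → Equiv.Perm (Fin 8)
  | 0 => Equiv.swap 4 6
  | 1 => Equiv.swap 5 7
  | 2 => Equiv.swap 1 5 * Equiv.swap 3 7 * Equiv.swap 4 6
  | 3 => Equiv.swap 0 4 * Equiv.swap 2 6 * Equiv.swap 5 7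
  | 4 => Equiv.swap 0 2
  | 5 => Equiv.swap 1 3
  | 6 => Equiv.swap 0 2 * Equiv.swap 1 5 * Equiv.swap 3 7
  | 7 => Equiv.swap 0 4 * Equiv.swap 1 3 * Equiv.swap 2 6

lemma mp_transfer : ∀ (m : ℕ) {X Y : Type} (op : X → X → X) (opY : Y → Y → Y)
    (e : X ≃ Y), (∀ a b, e (op a b) = opY (e a) (e b)) →
    IsMPCS m Y opY → IsMPCS m X op
  | 0, X, Y, op, opY, e, he, h => fun a b => e.injective (h _ _)
  | m + 1, X, Y, op, opY, e, he, ⟨Z, opZ, q, hsurj, hiff, hhom, hm⟩ => by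
    refine ⟨Z, opZ, fun x => q (e x), fun z => ?_, fun a b => ?_, fun a b => ?_, hm⟩
    · obtain ⟨y, hy⟩ := hsurj z
      exact ⟨e.symm y, by simp [hy]⟩
    · rw [hiff]
      constructor
      · intro h
        funext c
        have := congrFun h (e c)
        rw [← he, ← he] at this
        exact e.injective this
      · intro h
        funext y
        have : opY (e a) (e (e.symm y)) = opY (e b) (e (e.symm y)) := by
          rw [← he, ← he, h]
        simpa using this
    · simp only []; rw [he, hhom]

lemma not_mpcs : ∀ m, ¬ IsMPCS m (Fin 8) (fun x y => phi x y)
  | 0, h => by simpa using h 0 1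
  | m + 1, ⟨Y, opY, p, hsurj, hiff, hhom, hm⟩ => by
    have hphiinj : Function.Injective phi := by decide
    have hpinj : Function.Injective p := by
      intro a b h
      apply hphiinj
      have := (hiff a b).1 h
      exact Equiv.ext fun y => congrFun this y
    exact not_mpcs m (mp_transfer m _ opY (Equiv.ofBijective p ⟨hpinj, hsurj⟩) (fun a b => hhom a b) hm)

theorem stmt14 :
    Function.Injective phi ∧
    IsCycleSet (fun x y : Fin 8 => phi x y) ∧
    (∀ x : Fin 8, phi x x = x) ∧
    2 ≤ Nat.card (Fin 8) ∧
    ¬ ∃ m, IsMPCS m (Fin 8) (fun x y => phi x y) := by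
  refine ⟨by decide, ⟨fun x => (phi x).bijective, by decide⟩, by decide, by simp, ?_⟩
  rintro ⟨m, hm⟩
  exact not_mpcs m hm
end

section
/- For the cycle set X = {1,...,8} with x·y = φ_x(y), where φ₁ = (57), φ₂ = (68), φ₃ = (26)(48)(57), φ₄ = (15)(37)(68), φ₅ = (13), φ₆ = (24), φ₇ = (13)(26)(48), φ₈ = (15)(24)(37), the subgroup of Sym({1,...,8}) generated by φ₁,...,φ₈ is isomorphic to D₄ × D₄, where D₄ is the dihedral group of order 8. -/
set_option maxRecDepth 40000
set_option maxHeartbeats 2000000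

def pA : Equiv.Perm (Fin 8) := phi 1 * phi 3 * phi 0
def pS : Equiv.Perm (Fin 8) := phi 4
def pB : Equiv.Perm (Fin 8) := phi 0 * phi 2 * phi 1
def pT : Equiv.Perm (Fin 8) := phi 0 * phi 6

def g : DihedralGroup 4 → Equiv.Perm (Fin 8)
  | .r i => pA ^ i.val
  | .sr i => pS * pA ^ i.val

def h : DihedralGroup 4 → Equiv.Perm (Fin 8)
  | .r i => pB ^ i.val
  | .sr i => pT * pB ^ i.val

lemma g_mul : ∀ a b : DihedralGroup 4, g (a * b) = g a * g b := by decide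

lemma h_mul : ∀ a b : DihedralGroup 4, h (a * b) = h a * h b := by decide

lemma gh_comm : ∀ a b : DihedralGroup 4, g a * h b = h b * g a := by decide

def f : DihedralGroup 4 × DihedralGroup 4 →* Equiv.Perm (Fin 8) where
  toFun y := g y.1 * h y.2
  map_one' := by decide
  map_mul' := by
    intro x y
    show g (x.1 * y.1) * h (x.2 * y.2) = _
    rw [g_mul, h_mul, mul_assoc, ← mul_assoc (g y.1), gh_comm, mul_assoc, ← mul_assoc]

lemma f_inj : Function.Injective f :=
  (injective_iff_map_eq_one f).mpr (by decide)

lemma hrange : f.range = Subgroup.closure (Set.range phi) := by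
  apply le_antisymm
  · rintro x ⟨⟨a, b⟩, rfl⟩
    have hmem : ∀ i : Fin 8, phi i ∈ Subgroup.closure (Set.range phi) := fun i =>
      Subgroup.subset_closure ⟨i, rfl⟩
    have hA : pA ∈ Subgroup.closure (Set.range phi) :=
      mul_mem (mul_mem (hmem 1) (hmem 3)) (hmem 0)
    have hS : pS ∈ Subgroup.closure (Set.range phi) := hmem 4
    have hB : pB ∈ Subgroup.closure (Set.range phi) :=
      mul_mem (mul_mem (hmem 0) (hmem 2)) (hmem 1)
    have hT : pT ∈ Subgroup.closure (Set.range phi) := mul_mem (hmem 0) (hmem 6)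
    have hg : ∀ a : DihedralGroup 4, g a ∈ Subgroup.closure (Set.range phi) := by
      rintro (i | i)
      · exact pow_mem hA _
      · exact mul_mem hS (pow_mem hA _)
    have hh : ∀ b : DihedralGroup 4, h b ∈ Subgroup.closure (Set.range phi) := by
      rintro (i | i)
      · exact pow_mem hB _
      · exact mul_mem hT (pow_mem hB _)
    exact mul_mem (hg a) (hh b)
  · rw [Subgroup.closure_le]
    rintro x ⟨i, rfl⟩
    fin_cases i
    · exact ⟨(.sr 2, .r 0), by decide⟩
    · exact ⟨(.r 2, .sr 1), by decide⟩
    · exact ⟨(.sr 0, .sr 0), by decide⟩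
    · exact ⟨(.sr 3, .sr 1), by decide⟩
    · exact ⟨(.sr 0, .r 0), by decide⟩
    · exact ⟨(.r 2, .sr 3), by decide⟩
    · exact ⟨(.sr 2, .sr 0), by decide⟩
    · exact ⟨(.sr 3, .sr 3), by decide⟩

theorem stmt15 :
    Nonempty ((Subgroup.closure (Set.range phi)) ≃*
      DihedralGroup 4 × DihedralGroup 4) :=
  ⟨(MulEquiv.subgroupCongr hrange.symm).trans (MonoidHom.ofInjective f_inj).symm⟩
end

section
/- Let X be a finite square-free cycle set that is not a multipermutation cycle set, S a nonempty finite set, and α a dynamical cocycle of X with values in S satisfying α_{x,x}(s,s) = s for all x ∈ X, s ∈ S. Then the dynamical extension S ×_α X is a square-free cycle set that is not a multipermutation cycle set. -/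
def retSetoid (Z : Type) (opZ : Z → Z → Z) : Setoid Z where
  r a b := opZ a = opZ b
  iseqv := ⟨fun _ => rfl, Eq.symm, Eq.trans⟩

lemma key_claim {Z : Type} {opZ : Z → Z → Z}
    (hsurj : ∀ z, Function.Surjective (opZ z))
    (hcyc : ∀ x y z, opZ (opZ x y) (opZ x z) = opZ (opZ y x) (opZ y z))
    {b b' : Z} (h : opZ b = opZ b') (c : Z) :
    opZ (opZ c b) = opZ (opZ c b') := by
  funext d
  obtain ⟨e, rfl⟩ := hsurj c d
  calc opZ (opZ c b) (opZ c e) = opZ (opZ b c) (opZ b e) := hcyc c b e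
    _ = opZ (opZ b' c) (opZ b' e) := by rw [h]
    _ = opZ (opZ c b') (opZ c e) := (hcyc c b' e).symm

lemma mpcs_surj : ∀ (m : ℕ) (Y Z : Type) (opY : Y → Y → Y) (opZ : Z → Z → Z)
    (f : Y → Z), Function.Surjective f →
    (∀ a b, f (opY a b) = opZ (f a) (f b)) →
    (∀ z, Function.Surjective (opZ z)) →
    (∀ x y z, opZ (opZ x y) (opZ x z) = opZ (opZ y x) (opZ y z)) →
    IsMPCS m Y opY → IsMPCS m Z opZ := by
  intro m
  induction m with
  | zero =>
    intro Y Z opY opZ f hf hfh _ _ hY a b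
    obtain ⟨a', rfl⟩ := hf a
    obtain ⟨b', rfl⟩ := hf b
    exact congrArg f (hY a' b')
  | succ m ih =>
    rintro Y Z opY opZ f hf hfh hsurj hcyc ⟨Y', opY', p, hp, hpker, hphom, hY'⟩
    -- kernel transfer: p a = p b implies opZ (f a) = opZ (f b)
    have hker : ∀ a b : Y, p a = p b → opZ (f a) = opZ (f b) := by
      intro a b hab
      have hop : opY a = opY b := (hpker a b).mp hab
      funext z
      obtain ⟨w, rfl⟩ := hf z
      rw [← hfh, ← hfh, hop]
    -- the canonical retraction of Z
    let Z' := Quotient (retSetoid Z opZ)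
    let q : Z → Z' := Quotient.mk _
    have hq_eq : ∀ a b : Z, q a = q b ↔ opZ a = opZ b := by
      intro a b
      exact ⟨fun h => Quotient.exact h, fun h => Quotient.sound h⟩
    have hwd : ∀ a b a' b' : Z, opZ a = opZ a' → opZ b = opZ b' →
        q (opZ a b) = q (opZ a' b') := by
      intro a b a' b' ha hb
      apply Quotient.sound
      show opZ (opZ a b) = opZ (opZ a' b')
      have h1 : opZ a b = opZ a' b := congrFun ha b
      rw [h1]
      exact key_claim hsurj hcyc hb a'
    let opZ' : Z' → Z' → Z' :=
      Quotient.lift₂ (fun a b => q (opZ a b)) (fun a b a' b' ha hb => hwd a b a' b' ha hb)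
    have hqhom : ∀ a b : Z, q (opZ a b) = opZ' (q a) (q b) := fun _ _ => rfl
    -- map Y' → Z'
    let g : Y' → Z' := fun y' => q (f (Function.surjInv hp y'))
    have hgp : ∀ y : Y, g (p y) = q (f y) := by
      intro y
      have : p (Function.surjInv hp (p y)) = p y := Function.surjInv_eq hp (p y)
      exact (hq_eq _ _).mpr (hker _ _ this)
    have hg_surj : Function.Surjective g := by
      intro z'
      obtain ⟨z, rfl⟩ := Quotient.exists_rep z'
      obtain ⟨y, rfl⟩ := hf z
      exact ⟨p y, hgp y⟩
    have hg_hom : ∀ a b : Y', g (opY' a b) = opZ' (g a) (g b) := by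
      intro a b
      obtain ⟨a0, rfl⟩ := hp a
      obtain ⟨b0, rfl⟩ := hp b
      rw [← hphom, hgp, hgp, hgp, hfh, hqhom]
    have hZ'surj : ∀ z : Z', Function.Surjective (opZ' z) := by
      intro z' t'
      obtain ⟨c, rfl⟩ := Quotient.exists_rep z'
      obtain ⟨d, rfl⟩ := Quotient.exists_rep t'
      obtain ⟨e, rfl⟩ := hsurj c d
      exact ⟨q e, rfl⟩
    have hZ'cyc : ∀ x y z : Z', opZ' (opZ' x y) (opZ' x z) = opZ' (opZ' y x) (opZ' y z) := by
      intro x y z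
      obtain ⟨a, rfl⟩ := Quotient.exists_rep x
      obtain ⟨b, rfl⟩ := Quotient.exists_rep y
      obtain ⟨c, rfl⟩ := Quotient.exists_rep z
      show q (opZ (opZ a b) (opZ a c)) = q (opZ (opZ b a) (opZ b c))
      rw [hcyc]
    exact ⟨Z', opZ', q, Quotient.exists_rep, hq_eq, hqhom,
      ih Y' Z' opY' opZ' g hg_surj hg_hom hZ'surj hZ'cyc hY'⟩

theorem stmt16 {X S : Type} [Fintype X] [Fintype S] [Nonempty S]
    (op : X → X → X) (hX : IsCycleSet op) (hsf : ∀ x, op x x = x)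
    (hnmp : ¬ ∃ m, IsMPCS m X op)
    (α : X → X → S → S → S) (hα : IsDynamicalCocycle op α)
    (hαs : ∀ x s, α x x s s = s) :
    IsCycleSet (extOp op α) ∧ (∀ p : S × X, extOp op α p p = p) ∧
    ¬ ∃ m, IsMPCS m (S × X) (extOp op α) := by
  obtain ⟨hbij, hcyc⟩ := hX
  obtain ⟨hαbij, hαcoc⟩ := hα
  refine ⟨⟨?_, ?_⟩, ?_, ?_⟩
  · -- bijectivity
    rintro ⟨s, x⟩
    constructor
    · rintro ⟨t, y⟩ ⟨t', y'⟩ h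
      simp only [extOp, Prod.mk.injEq] at h
      obtain ⟨h1, h2⟩ := h
      have hy : y = y' := (hbij x).injective h2
      subst hy
      have ht : t = t' := (hαbij x y s).injective h1
      simp [ht]
    · rintro ⟨u, z⟩
      obtain ⟨y, hy⟩ := (hbij x).surjective z
      obtain ⟨t, ht⟩ := (hαbij x y s).surjective u
      exact ⟨(t, y), by simp [extOp, hy, ht]⟩
  · -- cycle identity
    rintro ⟨s, x⟩ ⟨t, y⟩ ⟨u, z⟩
    simp only [extOp, Prod.mk.injEq]
    exact ⟨hαcoc x y z s t u, hcyc x y z⟩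
  · -- square-free
    rintro ⟨s, x⟩
    simp [extOp, hsf, hαs]
  · -- not multipermutation
    rintro ⟨m, hm⟩
    refine hnmp ⟨m, ?_⟩
    refine mpcs_surj m (S × X) X (extOp op α) op Prod.snd ?_ ?_ ?_ hcyc hm
    · intro x
      obtain ⟨s⟩ := ‹Nonempty S›
      exact ⟨(s, x), rfl⟩
    · intro a b; rfl
    · intro x; exact (hbij x).surjective
end

section
/- Let f : Y → Z be a surjective homomorphism of finite nondegenerate involutive set-theoretic solutions of the Yang–Baxter equation. If Y is a multipermutation solution, then Z is a multipermutation solution. -/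
def r12 {X : Type} (r : X × X → X × X) : X × X × X → X × X × X :=
  fun q => ((r (q.1, q.2.1)).1, (r (q.1, q.2.1)).2, q.2.2)

def r23 {X : Type} (r : X × X → X × X) : X × X × X → X × X × X :=
  fun q => (q.1, r (q.2.1, q.2.2))

def IsSolution {X : Type} (r : X × X → X × X) : Prop :=
  Function.Bijective r ∧ (∀ p, r (r p) = p) ∧
  (∀ x, Function.Bijective fun y => (r (x, y)).1) ∧
  (∀ y, Function.Bijective fun x => (r (x, y)).2) ∧
  ∀ p, r12 r (r23 r (r12 r p)) = r23 r (r12 r (r23 r p))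

def IsMPSol : ℕ → (X : Type) → (X × X → X × X) → Prop
  | 0, X, _ => ∀ a b : X, a = b
  | m + 1, X, r => ∃ (Y : Type) (rY : Y × Y → Y × Y) (p : X → Y),
      Function.Surjective p ∧
      (∀ a b : X, (p a = p b ↔ (fun y => (r (a, y)).1) = fun y => (r (b, y)).1)) ∧
      (∀ q : X × X, rY (p q.1, p q.2) = (p (r q).1, p (r q).2)) ∧
      IsMPSol m Y rY

/-!
Proof idea: the retraction is functorial for surjective homomorphisms. If `f : Y → Z` is a
surjective homomorphism, then `σ_y = σ_y'` forces `σ_{f y} = σ_{f y'}`, so `f` descends to a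
surjective homomorphism `Ret Y → Ret Z`; since `Ret Z` of a finite solution is again a finite
solution, induction on the multipermutation level finishes the proof. The one delicate point is
that `Ret Z` is well defined, i.e. that `σ_a = σ_b` implies `σ_{σ_z a} = σ_{σ_z b}`: the
Yang–Baxter equation gives this for `σ_z⁻¹` in place of `σ_z`, and finiteness lets one pass from
a permutation to its inverse.
-/

open Function

variable {X X' W : Type} {r : X × X → X × X} {r' : X' × X' → X' × X'}

def sigma (r : X × X → X × X) (x : X) : X → X := fun y => (r (x, y)).1

def IsSolutionHom (r : X × X → X × X) (r' : X' × X' → X' × X') (f : X → X') : Prop :=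
  ∀ q : X × X, r' (f q.1, f q.2) = (f (r q).1, f (r q).2)

namespace IsSolutionHom

variable {f : X → X'}

theorem sigma_apply (hf : IsSolutionHom r r' f) (x y : X) :
    sigma r' (f x) (f y) = f (sigma r x y) :=
  congrArg Prod.fst (hf (x, y))

theorem sigma_congr (hf : IsSolutionHom r r' f) (hs : Surjective f) {x y : X}
    (hxy : sigma r x = sigma r y) : sigma r' (f x) = sigma r' (f y) := by
  funext z
  obtain ⟨z, rfl⟩ := hs z
  rw [hf.sigma_apply, hf.sigma_apply, hxy]

theorem r12_comm (hf : IsSolutionHom r r' f) (p : X × X × X) :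
    r12 r' (Prod.map f (Prod.map f f) p) = Prod.map f (Prod.map f f) (r12 r p) := by
  simp only [r12, Prod.map, hf (p.1, p.2.1)]

theorem r23_comm (hf : IsSolutionHom r r' f) (p : X × X × X) :
    r23 r' (Prod.map f (Prod.map f f) p) = Prod.map f (Prod.map f f) (r23 r p) := by
  simp only [r23, Prod.map, hf (p.2.1, p.2.2)]

theorem comp {r'' : W × W → W × W} {g : X' → W} (hg : IsSolutionHom r' r'' g)
    (hf : IsSolutionHom r r' f) : IsSolutionHom r r'' (g ∘ f) := fun q => by
  simp only [comp_apply, hg (f q.1, f q.2), hf q]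

theorem exists_factor {r₁ : X' × X' → X' × X'} {rW : W × W → W × W} {p : X → X'}
    (hp : IsSolutionHom r r₁ p) (hps : Surjective p) {g : X → W} (hg : IsSolutionHom r rW g)
    (hfib : ∀ a b, p a = p b → g a = g b) :
    ∃ h : X' → W, h ∘ p = g ∧ IsSolutionHom r₁ rW h := by
  have hfac : ∀ a, g (surjInv hps (p a)) = g a := fun a => hfib _ _ (surjInv_eq hps (p a))
  refine ⟨fun u => g (surjInv hps u), funext hfac, ?_⟩
  rintro ⟨u, v⟩
  obtain ⟨a, rfl⟩ := hps u
  obtain ⟨b, rfl⟩ := hps v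
  simp only [hfac, hg (a, b), hp (a, b)]

end IsSolutionHom

def retractSetoid (r : X × X → X × X) : Setoid X :=
  Setoid.ker (sigma r)

theorem retractSetoid_mk_eq_iff {a b : X} :
    Quotient.mk (retractSetoid r) a = Quotient.mk (retractSetoid r) b ↔ sigma r a = sigma r b :=
  Quotient.eq

namespace IsSolution

theorem sigma_bijective (h : IsSolution r) (x : X) : Bijective (sigma r x) := h.2.2.1 x

theorem sigma_fst_snd (h : IsSolution r) (x y : X) : sigma r (r (x, y)).1 (r (x, y)).2 = x :=
  congrArg Prod.fst (h.2.1 (x, y))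

theorem sigma_fst_sigma_snd (h : IsSolution r) (x y z : X) :
    sigma r (r (x, y)).1 (sigma r (r (x, y)).2 z) = sigma r x (sigma r y z) := by
  simpa [r12, r23, sigma] using congrArg Prod.fst (h.2.2.2.2 (x, y, z))

noncomputable def sigmaPerm (h : IsSolution r) (x : X) : Equiv.Perm X :=
  Equiv.ofBijective _ (h.sigma_bijective x)

theorem sigmaPerm_congr (h : IsSolution r) {a b : X} (hab : sigma r a = sigma r b) :
    h.sigmaPerm a = h.sigmaPerm b :=
  Equiv.ext (congrFun hab)

theorem snd_eq_sigmaPerm_symm (h : IsSolution r) (x y : X) :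
    (r (x, y)).2 = (h.sigmaPerm (r (x, y)).1).symm x :=
  (Equiv.eq_symm_apply _).mpr (h.sigma_fst_snd x y)

/-- The Yang–Baxter equation applied to `(z, σ_z⁻¹ a)`, whose image under `r` is
`(a, σ_a⁻¹ z)`. -/
theorem sigma_comp_sigma_symm (h : IsSolution r) (a z : X) :
    sigma r z ∘ sigma r ((h.sigmaPerm z).symm a) =
      sigma r a ∘ sigma r ((h.sigmaPerm a).symm z) := by
  set y := (h.sigmaPerm z).symm a
  have hfst : (r (z, y)).1 = a := (h.sigmaPerm z).apply_symm_apply a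
  have hsnd := h.snd_eq_sigmaPerm_symm z y
  rw [hfst] at hsnd
  funext w
  simpa only [comp_apply, hfst, hsnd] using (h.sigma_fst_sigma_snd z y w).symm

theorem sigma_sigmaPerm_symm_congr (h : IsSolution r) {a b : X} (hab : sigma r a = sigma r b)
    (z : X) : sigma r ((h.sigmaPerm z).symm a) = sigma r ((h.sigmaPerm z).symm b) := by
  have ha := h.sigma_comp_sigma_symm a z
  rw [hab, h.sigmaPerm_congr hab, ← h.sigma_comp_sigma_symm b z] at ha
  exact (h.sigma_bijective z).1.comp_left ha

theorem sigma_sigma_congr [Finite X] (h : IsSolution r) {a b : X} (hab : sigma r a = sigma r b)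
    (z : X) : sigma r (sigma r z a) = sigma r (sigma r z b) := by
  let g : Equiv.Perm (X × X) := (h.sigmaPerm z).symm.prodCongr (h.sigmaPerm z).symm
  have hg : Set.MapsTo g {p | sigma r p.1 = sigma r p.2} {p | sigma r p.1 = sigma r p.2} :=
    fun p hp => h.sigma_sigmaPerm_symm_congr hp z
  exact Equiv.Perm.perm_symm_mapsTo_of_mapsTo g hg (x := (a, b)) hab

theorem sigma_fst_congr [Finite X] (h : IsSolution r) {a b c d : X}
    (hab : sigma r a = sigma r b) (hcd : sigma r c = sigma r d) :
    sigma r (r (a, c)).1 = sigma r (r (b, d)).1 :=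
  (h.sigma_sigma_congr hcd a).trans (congrArg (fun s => sigma r (s d)) hab)

theorem sigma_snd_congr [Finite X] (h : IsSolution r) {a b c d : X}
    (hab : sigma r a = sigma r b) (hcd : sigma r c = sigma r d) :
    sigma r (r (a, c)).2 = sigma r (r (b, d)).2 := by
  rw [h.snd_eq_sigmaPerm_symm, h.snd_eq_sigmaPerm_symm b,
    ← h.sigmaPerm_congr (h.sigma_fst_congr hab hcd)]
  exact h.sigma_sigmaPerm_symm_congr hab _

theorem of_surjective_hom [Finite X'] (h : IsSolution r) {f : X → X'}
    (hf : IsSolutionHom r r' f) (hs : Surjective f) : IsSolution r' := by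
  have hs2 : Surjective (Prod.map f f) := hs.prodMap hs
  have hs3 : Surjective (Prod.map f (Prod.map f f)) := hs.prodMap hs2
  have hinv : Involutive r' := by
    refine hs2.forall.mpr fun q => ?_
    change r' (r' (f q.1, f q.2)) = (f q.1, f q.2)
    rw [hf q, hf (r q), h.2.1 q]
  refine ⟨hinv.bijective, hinv, fun x => ?_, fun y => ?_, hs3.forall.mpr fun p => ?_⟩
  · obtain ⟨x, rfl⟩ := hs x
    have hcomm : sigma r' (f x) ∘ f = f ∘ sigma r x := funext (hf.sigma_apply x)
    refine Finite.surjective_iff_bijective.mp (Surjective.of_comp (g := f) ?_)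
    exact hcomm ▸ hs.comp (h.sigma_bijective x).2
  · obtain ⟨y, rfl⟩ := hs y
    have hcomm : (fun x => (r' (x, f y)).2) ∘ f = f ∘ fun x => (r (x, y)).2 :=
      funext fun x => congrArg Prod.snd (hf (x, y))
    refine Finite.surjective_iff_bijective.mp (Surjective.of_comp (g := f) ?_)
    exact hcomm ▸ hs.comp (h.2.2.2.1 y).2
  · simp only [hf.r12_comm, hf.r23_comm, h.2.2.2.2 p]

def retract [Finite X] (h : IsSolution r) :
    Quotient (retractSetoid r) × Quotient (retractSetoid r) →
      Quotient (retractSetoid r) × Quotient (retractSetoid r) :=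
  fun p => Quotient.lift₂ (fun a c => (Quotient.mk _ (r (a, c)).1, Quotient.mk _ (r (a, c)).2))
    (fun _ _ _ _ hab hcd => Prod.ext (Quotient.sound (h.sigma_fst_congr hab hcd))
      (Quotient.sound (h.sigma_snd_congr hab hcd))) p.1 p.2

theorem isSolutionHom_retract [Finite X] (h : IsSolution r) :
    IsSolutionHom r h.retract (Quotient.mk (retractSetoid r)) :=
  fun _ => rfl

theorem retract_isSolution [Finite X] (h : IsSolution r) : IsSolution h.retract :=
  h.of_surjective_hom h.isSolutionHom_retract Quotient.mk_surjective

end IsSolution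

theorem IsMPSol.of_surjective_hom (m : ℕ) :
    ∀ {Y Z : Type} [Finite Z] {rY : Y × Y → Y × Y} {rZ : Z × Z → Z × Z} {f : Y → Z},
      IsSolution rZ → IsSolutionHom rY rZ f → Surjective f → IsMPSol m Y rY → IsMPSol m Z rZ := by
  induction m with
  | zero =>
    intro Y Z _ rY rZ f _ _ hs hY a b
    obtain ⟨a, rfl⟩ := hs a
    obtain ⟨b, rfl⟩ := hs b
    exact congrArg f (hY a b)
  | succ m ih =>
    intro Y Z _ rY rZ f hZ hf hs hY
    obtain ⟨Y', rY', p, hps, hp_iff, hp, hY'⟩ := hY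
    have hq := hZ.isSolutionHom_retract
    obtain ⟨f', hf'_comp, hf'⟩ := IsSolutionHom.exists_factor hp hps (hq.comp hf)
      fun a b hab => retractSetoid_mk_eq_iff.mpr (hf.sigma_congr hs ((hp_iff a b).mp hab))
    have hf's : Surjective f' :=
      Surjective.of_comp (g := p) (hf'_comp ▸ Quotient.mk_surjective.comp hs)
    exact ⟨_, hZ.retract, Quotient.mk _, Quotient.mk_surjective,
      fun _ _ => retractSetoid_mk_eq_iff, hq, ih hZ.retract_isSolution hf' hf's hY'⟩

theorem stmt17_general {Y Z : Type} [Fintype Z]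
    (rY : Y × Y → Y × Y) (rZ : Z × Z → Z × Z)
    (hZ : IsSolution rZ)
    (f : Y → Z) (hf : Function.Surjective f)
    (hhom : ∀ q : Y × Y, rZ (f q.1, f q.2) = (f (rY q).1, f (rY q).2))
    (hmp : ∃ m, IsMPSol m Y rY) : ∃ m, IsMPSol m Z rZ :=
  hmp.imp fun m hm => IsMPSol.of_surjective_hom m hZ hhom hf hm

theorem stmt17 {Y Z : Type} [Fintype Y] [Fintype Z]
    (rY : Y × Y → Y × Y) (rZ : Z × Z → Z × Z)
    (hY : IsSolution rY) (hZ : IsSolution rZ)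
    (f : Y → Z) (hf : Function.Surjective f)
    (hhom : ∀ q : Y × Y, rZ (f q.1, f q.2) = (f (rY q).1, f (rY q).2))
    (hmp : ∃ m, IsMPSol m Y rY) : ∃ m, IsMPSol m Z rZ :=
  stmt17_general rY rZ hZ f hf hhom hmp
end

section
/- The set X = {1,...,6} with x·y = ψ_x(y), where ψ₁ = (25), ψ₂ = (14), ψ₃ = (12)(45), ψ₄ = (25)(36), ψ₅ = (14)(36), ψ₆ = (12)(45), is a square-free cycle set whose associated involutive solution is a multipermutation solution of level exactly 4. In particular, there exists a square-free multipermutation solution X with |X| = 6 and mpl(X) = 4 > log₂ 6, refuting the bound mpl(X) ≤ log₂ |X|. -/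
def psi : Fin 6 → Equiv.Perm (Fin 6)
  | 0 => Equiv.swap 1 4
  | 1 => Equiv.swap 0 3
  | 2 => Equiv.swap 0 1 * Equiv.swap 3 4
  | 3 => Equiv.swap 1 4 * Equiv.swap 2 5
  | 4 => Equiv.swap 0 3 * Equiv.swap 2 5
  | 5 => Equiv.swap 0 1 * Equiv.swap 3 4

/-- Retraction tower data. -/
def op0 : Fin 6 → Fin 6 → Fin 6 := fun x y => psi x y

def op1 : Fin 5 → Fin 5 → Fin 5 :=
  ![![0,4,2,3,1], ![3,1,2,0,4], ![1,0,2,4,3], ![0,4,2,3,1], ![3,1,2,0,4]]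

def op2 : Fin 3 → Fin 3 → Fin 3 :=
  ![![0,1,2], ![0,1,2], ![1,0,2]]

def op3 : Fin 2 → Fin 2 → Fin 2 := fun _ b => b

def q0 : Fin 6 → Fin 5 := ![0,1,2,3,4,2]
def q1 : Fin 5 → Fin 3 := ![0,1,2,0,1]
def q2 : Fin 3 → Fin 2 := ![0,0,1]
def q3 : Fin 2 → Fin 1 := fun _ => 0

/-- Transport of `IsMPCS` along a bijection intertwining the operations. -/
lemma isMPCS_transport : ∀ (m : ℕ) {Y Z : Type} (opY : Y → Y → Y) (opZ : Z → Z → Z)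
    (e : Y → Z), Function.Bijective e → (∀ a b, e (opY a b) = opZ (e a) (e b)) →
    IsMPCS m Y opY → IsMPCS m Z opZ := by
  intro m
  induction m with
  | zero =>
    intro Y Z opY opZ e he hco h a b
    obtain ⟨ya, rfl⟩ := he.2 a
    obtain ⟨yb, rfl⟩ := he.2 b
    exact congrArg e (h ya yb)
  | succ m ih =>
    intro Y Z opY opZ e he hco h
    obtain ⟨W, opW, p, hps, hpf, hpc, hW⟩ := h
    set g : Z → Y := Function.surjInv he.2 with hg_def
    have heg : ∀ z, e (g z) = z := Function.surjInv_eq he.2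
    have hge : ∀ y, g (e y) = y := fun y => he.1 (heg (e y))
    have key : ∀ y y' : Y, opY y = opY y' ↔ opZ (e y) = opZ (e y') := by
      intro y y'
      constructor
      · intro hyy
        funext c
        rw [← heg c, ← hco, hyy, hco]
      · intro hzz
        funext c
        apply he.1
        rw [hco, hco, hzz]
    refine ⟨W, opW, p ∘ g, hps.comp fun y => ⟨e y, hge y⟩, ?_, ?_, hW⟩
    · intro a b
      rw [Function.comp_apply, Function.comp_apply, hpf, key, heg, heg]
    · intro a b
      have h1 : opZ a b = e (opY (g a) (g b)) := by rw [hco, heg, heg]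
      show p (g (opZ a b)) = opW (p (g a)) (p (g b))
      rw [h1, hge, hpc]

/-- If a quotient map `q` realizes the canonical retraction, then `IsMPCS` descends. -/
lemma isMPCS_step {X Z : Type} (op : X → X → X) (opZ : Z → Z → Z) (q : X → Z)
    (hs : Function.Surjective q) (hf : ∀ a b : X, q a = q b ↔ op a = op b)
    (hc : ∀ a b, q (op a b) = opZ (q a) (q b)) (m : ℕ)
    (h : IsMPCS (m + 1) X op) : IsMPCS m Z opZ := by
  obtain ⟨Y, opY, p, hps, hpf, hpc, hY⟩ := h
  set s : Y → X := Function.surjInv hps with hs_def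
  have hsp : ∀ y, p (s y) = y := Function.surjInv_eq hps
  have hqsp : ∀ x, q (s (p x)) = q x := by
    intro x
    rw [hf]
    rw [← hpf, hsp]
  refine isMPCS_transport m opY opZ (fun y => q (s y)) ⟨?_, ?_⟩ ?_ hY
  · intro y y' hyy
    have : op (s y) = op (s y') := (hf _ _).1 hyy
    have : p (s y) = p (s y') := (hpf _ _).2 this
    rwa [hsp, hsp] at this
  · intro z
    obtain ⟨x, rfl⟩ := hs z
    exact ⟨p x, hqsp x⟩
  · intro a b
    obtain ⟨x, rfl⟩ := hps a
    obtain ⟨x', rfl⟩ := hps b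
    show q (s (opY (p x) (p x'))) = opZ (q (s (p x))) (q (s (p x')))
    rw [← hpc, hqsp, hqsp, hqsp, hc]

theorem stmt18 :
    IsCycleSet (fun x y : Fin 6 => psi x y) ∧
    (∀ x : Fin 6, psi x x = x) ∧
    IsMPCS 4 (Fin 6) (fun x y => psi x y) ∧
    ¬ IsMPCS 3 (Fin 6) (fun x y => psi x y) ∧
    Real.logb 2 6 < 4 := by
  refine ⟨⟨by decide, by decide⟩, by decide, ?_, ?_, ?_⟩
  · -- IsMPCS 4
    refine ⟨Fin 5, op1, q0, by decide, by decide, by decide,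
      Fin 3, op2, q1, by decide, by decide, by decide,
      Fin 2, op3, q2, by decide, by decide, by decide,
      Fin 1, fun _ _ => 0, q3, by decide, by decide, by decide,
      fun a b => Subsingleton.elim a b⟩
  · -- ¬ IsMPCS 3
    intro h
    have h1 : IsMPCS 2 (Fin 5) op1 :=
      isMPCS_step _ op1 q0 (by decide) (by decide) (by decide) 2 h
    have h2 : IsMPCS 1 (Fin 3) op2 :=
      isMPCS_step _ op2 q1 (by decide) (by decide) (by decide) 1 h1
    have h3 : IsMPCS 0 (Fin 2) op3 :=
      isMPCS_step _ op3 q2 (by decide) (by decide) (by decide) 0 h2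
    exact absurd (h3 0 1) (by decide)
  · -- logb
    have h16 : Real.logb 2 16 = 4 := by
      rw [show (16 : ℝ) = 2 ^ (4 : ℕ) by norm_num, Real.logb_pow,
        Real.logb_self_eq_one (by norm_num)]
      norm_num
    calc Real.logb 2 6 < Real.logb 2 16 :=
          Real.logb_lt_logb (by norm_num) (by norm_num) (by norm_num)
      _ = 4 := h16
end
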